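/- arXiv:2011.00455 — 2 statements merged into one kernel-verified Lean document; each statement's English description precedes it below -/
import Mathlib

section
/- Let M be an atomic reduced cancellative monoid whose set of atoms H admits a stratification H = H₁ ∪ ... ∪ H_k satisfying additionally: for each i and distinct q,q' ∈ H_i, q and q' are coprime in M_i = ⟨H_i ∪ ... ∪ H_k⟩. Then each x ∈ M has a unique representation x = h₁ + ... + h_k with h_i ∈ ⟨H_i⟩ and h_i + ... + h_k ∈ Ap(M, H₁ ∪ ... ∪ H_{i−1}) for i ≥ 2. -/
/-- `x ≤_M y` : divisibility in the additive monoid `M`. -/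
def MDvd {M : Type*} [AddCancelCommMonoid M] (x y : M) : Prop := ∃ z : M, y = x + z

/-- Divisibility inside a submonoid `N` of `M`. -/
def NDvd {M : Type*} [AddCancelCommMonoid M] (N : AddSubmonoid M) (x y : M) : Prop :=
  ∃ z ∈ N, y = x + z

/-- An atom: a nonzero element that is not the sum of two nonzero elements. -/
def IsAtomM {M : Type*} [AddCancelCommMonoid M] (a : M) : Prop :=
  a ≠ 0 ∧ ∀ b c : M, a = b + c → b = 0 ∨ c = 0

/-- `M` is atomic: every element is a finite sum of atoms. -/
def AtomicM (M : Type*) [AddCancelCommMonoid M] : Prop :=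
  ∀ x : M, ∃ l : Multiset M, (∀ a ∈ l, IsAtomM a) ∧ l.sum = x

/-- The Apéry set `Ap(M,X) = M \ (X + M)`. -/
def AperyM {M : Type*} [AddCancelCommMonoid M] (X : Set M) : Set M :=
  {x | ∀ q ∈ X, ¬ MDvd q x}

/-- The sum `Σ_{q ∈ Q} λ_q q` encoded by a finitely supported function. -/
def fsum {M : Type*} [AddCancelCommMonoid M] (f : M →₀ ℕ) : M :=
  f.sum fun q n => n • q

/-- `⟨Q⟩` is factorial, freely generated by `Q`. -/
def FreeOn {M : Type*} [AddCancelCommMonoid M] (Q : Set M) : Prop :=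
  ∀ f g : M →₀ ℕ, (f.support : Set M) ⊆ Q → (g.support : Set M) ⊆ Q →
    fsum f = fsum g → f = g

/-- `Q` is linked to the submonoid `N` of `M`. -/
def LinkedIn {M : Type*} [AddCancelCommMonoid M] (N : AddSubmonoid M) (Q : Set M) :
    Prop :=
  ∀ x ∈ N, x ≠ 0 → ∃ c : ℕ, ∀ f : M →₀ ℕ, (f.support : Set M) ⊆ Q →
    NDvd N (fsum f) x → (f.sum fun _ n => n) ≤ c

/-- `x` is coprime with `y` in the submonoid `N`. -/
def CoprimeIn {M : Type*} [AddCancelCommMonoid M] (N : AddSubmonoid M) (x y : M) :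
    Prop :=
  ¬ NDvd N x y ∧ ∀ m ∈ N, NDvd N x (m + y) → NDvd N x m

/-!
Write `Mᵢ` for the submonoid generated by `Hᵢ ∪ ⋯ ∪ H_k`; by atomicity every element of
`Ap(M, H₁ ∪ ⋯ ∪ H_{i-1})` lies in `Mᵢ`.

Existence: starting from such an element, split off elements of `Hᵢ` as long as one of them
divides the remainder. Linkedness of `Hᵢ` to `Mᵢ` bounds the number of steps, and the final
remainder lies in `Ap(M, H₁ ∪ ⋯ ∪ Hᵢ)`, so the construction passes to the next stratum.

Uniqueness: suppose `a + u = b + v` with `a, b ∈ ⟨Hᵢ⟩` and `u, v ∈ Mᵢ` divisible by no element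
of `Hᵢ`. A summand `q ∈ Hᵢ` of `a` divides `b + v` in `Mᵢ`; by coprimality it passes through
every summand of `b` other than `q`, and it does not divide `v`, so `q` is a summand of `b` and
cancels. Hence `a = b` and `u = v`, and the tails `hᵢ + ⋯ + h_k` of two representations agree
stratum by stratum.
-/

section Strata

variable {M : Type*} {k : ℕ} (Hs : Fin k → Set M)

/-- Indices are `0`-based: `strataBelow Hs n` is the paper's `H₁ ∪ ⋯ ∪ Hₙ`, and below
`tailSum h n` is `h_{n+1} + ⋯ + h_k`. -/
def strataBelow (n : ℕ) : Set M := ⋃ j ∈ {j : Fin k | (j : ℕ) < n}, Hs j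

lemma strataBelow_succ (i : Fin k) : strataBelow Hs (i + 1) = strataBelow Hs i ∪ Hs i := by
  ext q
  simp only [strataBelow, Set.mem_iUnion, Set.mem_union, Set.mem_ofPred_eq, exists_prop,
    Nat.lt_succ_iff_lt_or_eq, or_and_right, exists_or, Fin.val_inj, exists_eq_left]

lemma strataBelow_of_le {n : ℕ} (hn : k ≤ n) : strataBelow Hs n = ⋃ j, Hs j := by
  simp [strataBelow, show ∀ j : Fin k, (j : ℕ) < n from fun j => by omega]

end Strata

section Development

variable {M : Type*} [AddCancelCommMonoid M]

lemma NDvd.mdvd {N : AddSubmonoid M} {x y : M} (h : NDvd N x y) : MDvd x y :=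
  let ⟨z, _, hz⟩ := h
  ⟨z, hz⟩

lemma mdvd_sum_of_mem {a : M} {l : Multiset M} (h : a ∈ l) : MDvd a l.sum := by
  classical
  exact ⟨(l.erase a).sum, by rw [← Multiset.sum_cons, Multiset.cons_erase h]⟩

lemma aperyM_union (X Y : Set M) : AperyM (X ∪ Y) = AperyM X ∩ AperyM Y := by
  ext x
  simp only [AperyM, Set.mem_union, Set.mem_inter_iff]
  exact ⟨fun h => ⟨fun q hq => h q (.inl hq), fun q hq => h q (.inr hq)⟩,
    fun h q => Or.rec (h.1 q) (h.2 q)⟩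

lemma mem_aperyM_of_add_left {X : Set M} {a z : M} (h : a + z ∈ AperyM X) : z ∈ AperyM X :=
  fun q hq ⟨w, hw⟩ => h q hq ⟨a + w, by rw [hw, add_left_comm]⟩

lemma zero_mem_aperyM (hred : ∀ a b : M, a + b = 0 → a = 0) {X : Set M} (hX : 0 ∉ X) :
    0 ∈ AperyM X :=
  fun q hq ⟨z, hz⟩ => hX (hred q z hz.symm ▸ hq)

lemma AtomicM.mem_closure_atoms_mdvd (hatomic : AtomicM M) (x : M) :
    x ∈ AddSubmonoid.closure {q | IsAtomM q ∧ MDvd q x} := by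
  obtain ⟨l, hl, rfl⟩ := hatomic x
  exact AddSubmonoid.multiset_sum_mem _ l fun a ha =>
    AddSubmonoid.subset_closure ⟨hl a ha, mdvd_sum_of_mem ha⟩

lemma AtomicM.eq_zero_of_forall_not_mdvd (hatomic : AtomicM M) {x : M}
    (hx : ∀ q, IsAtomM q → ¬ MDvd q x) : x = 0 := by
  have hempty : {q | IsAtomM q ∧ MDvd q x} = ∅ :=
    Set.eq_empty_of_forall_notMem fun q hq => hx q hq.1 hq.2
  simpa [hempty] using hatomic.mem_closure_atoms_mdvd x

section Coprime

variable {N : AddSubmonoid M} {Q : Set M}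

lemma exists_eq_add_of_nDvd_add (hQN : Q ⊆ N) (hQ : Q.Pairwise (CoprimeIn N)) {q v : M}
    (hq : q ∈ Q) (hv : v ∈ N) (hqv : ¬ MDvd q v) {b : M} (hb : b ∈ AddSubmonoid.closure Q)
    (hdvd : NDvd N q (b + v)) : ∃ b' ∈ AddSubmonoid.closure Q, b = q + b' := by
  induction hb using AddSubmonoid.closure_induction_left with
  | zero => exact absurd (zero_add v ▸ hdvd).mdvd hqv
  | add_left q' hq' b hb ih =>
    by_cases hqq' : q = q'
    · exact ⟨b, hb, hqq' ▸ rfl⟩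
    have hbv : b + v ∈ N := add_mem (AddSubmonoid.closure_le.2 hQN hb) hv
    obtain ⟨b', hb', rfl⟩ := ih ((hQ hq hq' hqq').2 _ hbv (by rwa [add_comm, ← add_assoc]))
    exact ⟨q' + b', add_mem (AddSubmonoid.subset_closure hq') hb', add_left_comm _ _ _⟩

lemma eq_and_eq_of_add_eq_add (hQN : Q ⊆ N) (hQ : Q.Pairwise (CoprimeIn N)) {a b u v : M}
    (ha : a ∈ AddSubmonoid.closure Q) (hb : b ∈ AddSubmonoid.closure Q) (hu : u ∈ N)
    (hv : v ∈ N) (huQ : u ∈ AperyM Q) (hvQ : v ∈ AperyM Q) (h : a + u = b + v) :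
    a = b ∧ u = v := by
  induction ha using AddSubmonoid.closure_induction_left generalizing b with
  | zero =>
    rw [zero_add] at h
    induction hb using AddSubmonoid.closure_induction_left with
    | zero => exact ⟨rfl, by rwa [zero_add] at h⟩
    | add_left q hq b _ _ => exact absurd ⟨b + v, by rw [h, add_assoc]⟩ (huQ q hq)
  | add_left q hq a ha ih =>
    have hau : a + u ∈ N := add_mem (AddSubmonoid.closure_le.2 hQN ha) hu
    obtain ⟨b', hb', rfl⟩ :=
      exists_eq_add_of_nDvd_add hQN hQ hq hv (hvQ q hq) hb ⟨a + u, hau, by rw [← h, add_assoc]⟩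
    obtain ⟨rfl, rfl⟩ := ih hb' (add_left_cancel (by rwa [add_assoc, add_assoc] at h))
    exact ⟨rfl, rfl⟩

end Coprime

lemma fsum_mem_closure {Q : Set M} {f : M →₀ ℕ} (hf : (f.support : Set M) ⊆ Q) :
    fsum f ∈ AddSubmonoid.closure Q :=
  AddSubmonoid.sum_mem _ fun _ hq =>
    AddSubmonoid.nsmul_mem _ (AddSubmonoid.subset_closure (hf hq)) _

lemma fsum_add_single (f : M →₀ ℕ) (q : M) : fsum (f + Finsupp.single q 1) = fsum f + q := by
  rw [fsum, Finsupp.sum_add_index' (fun a => zero_smul ℕ a) (fun a m n => add_nsmul a m n),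
    Finsupp.sum_single_index (zero_smul ℕ q), one_smul]
  rfl

lemma LinkedIn.exists_eq_add_mem_aperyM {N : AddSubmonoid M} {Q : Set M} (hlink : LinkedIn N Q)
    {x : M} (hx0 : x ≠ 0) (hxN : ∀ z, MDvd z x → z ∈ N) :
    ∃ a ∈ AddSubmonoid.closure Q, ∃ z ∈ AperyM Q, x = a + z := by
  obtain ⟨c, hc⟩ := hlink x (hxN x ⟨0, (add_zero x).symm⟩) hx0
  by_contra! hnone
  have hpeel : ∀ n : ℕ, ∃ f : M →₀ ℕ, (f.support : Set M) ⊆ Q ∧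
      (f.sum fun _ m => m) = n ∧ MDvd (fsum f) x := by
    intro n
    induction n with
    | zero => exact ⟨0, by simp, by simp, x, by simp [fsum]⟩
    | succ n ih =>
      obtain ⟨f, hfQ, hfn, z, hz⟩ := ih
      have hzQ : z ∉ AperyM Q := fun hzQ => hnone _ (fsum_mem_closure hfQ) z hzQ hz
      simp only [AperyM, Set.mem_ofPred_eq, not_forall, not_not] at hzQ
      obtain ⟨q, hq, w, rfl⟩ := hzQ
      refine ⟨f + Finsupp.single q 1, ?_, ?_, w, by rw [hz, fsum_add_single, add_assoc]⟩
      · classical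
        refine (Finset.coe_subset.2 Finsupp.support_add).trans ?_
        simpa [Set.insert_subset_iff, hq] using hfQ
      · rw [Finsupp.sum_add_index' (fun _ => rfl) (fun _ _ _ => rfl), hfn,
          Finsupp.sum_single_index rfl]
  obtain ⟨f, hfQ, hfc, z, hz⟩ := hpeel (c + 1)
  have := hc f hfQ ⟨z, hxN z ⟨fsum f, by rw [hz, add_comm]⟩, hz⟩
  omega

section TailSum

variable {k : ℕ}

def tailSum (h : Fin k → M) (n : ℕ) : M :=
  ∑ j ∈ Finset.univ.filter fun j : Fin k => n ≤ (j : ℕ), h j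

lemma tailSum_zero (h : Fin k → M) : tailSum h 0 = ∑ j, h j := by
  simp [tailSum]

lemma tailSum_of_le (h : Fin k → M) {n : ℕ} (hn : k ≤ n) : tailSum h n = 0 :=
  Finset.sum_eq_zero fun j hj => absurd (Finset.mem_filter.1 hj).2 (by omega)

lemma tailSum_eq_add (h : Fin k → M) (i : Fin k) : tailSum h i = h i + tailSum h (i + 1) := by
  have : Finset.univ.filter (fun j : Fin k => (i : ℕ) ≤ j) =
      insert i (Finset.univ.filter fun j : Fin k => (i : ℕ) + 1 ≤ j) := by
    ext j
    simp only [Finset.mem_filter, Finset.mem_univ, true_and, Finset.mem_insert, Fin.ext_iff]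
    omega
  rw [tailSum, this, Finset.sum_insert (by simp)]
  rfl

lemma tailSum_update_of_lt (h : Fin k → M) {i : Fin k} {n : ℕ}
    (hi : (i : ℕ) < n) (a : M) : tailSum (Function.update h i a) n = tailSum h n :=
  Finset.sum_congr rfl fun j hj =>
    Function.update_of_ne (fun hji => by subst hji; simp at hj; omega) a h

end TailSum

section Stratification

variable {k : ℕ} {Hs : Fin k → Set M}

lemma isAtomM_of_mem (hunion : (⋃ i, Hs i) = {a : M | IsAtomM a}) {j : Fin k} {q : M}
    (hq : q ∈ Hs j) : IsAtomM q :=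
  (hunion ▸ Set.mem_iUnion.2 ⟨j, hq⟩ : q ∈ {a : M | IsAtomM a})

lemma zero_mem_aperyM_strataBelow (hred : ∀ a b : M, a + b = 0 → a = 0)
    (hunion : (⋃ i, Hs i) = {a : M | IsAtomM a}) (n : ℕ) : 0 ∈ AperyM (strataBelow Hs n) :=
  zero_mem_aperyM hred fun h0 => by
    obtain ⟨j, -, hj⟩ := Set.mem_iUnion₂.1 h0
    exact (isAtomM_of_mem hunion hj).1 rfl

lemma mem_closure_of_mem_aperyM_strataBelow (hatomic : AtomicM M)
    (hunion : (⋃ i, Hs i) = {a : M | IsAtomM a}) (i : Fin k) {x : M}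
    (hx : x ∈ AperyM (strataBelow Hs i)) :
    x ∈ AddSubmonoid.closure (⋃ j ∈ {j : Fin k | i ≤ j}, Hs j) := by
  refine AddSubmonoid.closure_mono (fun q hq => ?_) (hatomic.mem_closure_atoms_mdvd x)
  obtain ⟨j, hqj⟩ := Set.mem_iUnion.1 (hunion.symm ▸ hq.1 : q ∈ ⋃ j, Hs j)
  obtain hji | hij := lt_or_ge j i
  · exact absurd hq.2 (hx q (Set.mem_biUnion hji hqj))
  · exact Set.mem_biUnion hij hqj

lemma exists_eq_add_of_mem_aperyM_strataBelow (hred : ∀ a b : M, a + b = 0 → a = 0)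
    (hatomic : AtomicM M) (hunion : (⋃ i, Hs i) = {a : M | IsAtomM a})
    (hlink : ∀ i : Fin k,
      LinkedIn (AddSubmonoid.closure (⋃ j ∈ {j : Fin k | i ≤ j}, Hs j)) (Hs i))
    (i : Fin k) {x : M} (hx : x ∈ AperyM (strataBelow Hs i)) :
    ∃ a ∈ AddSubmonoid.closure (Hs i), ∃ z ∈ AperyM (strataBelow Hs (i + 1)), x = a + z := by
  by_cases hx0 : x = 0
  · exact ⟨0, zero_mem _, 0, zero_mem_aperyM_strataBelow hred hunion _, by rw [hx0, add_zero]⟩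
  have hdvd : ∀ z, MDvd z x → z ∈ AperyM (strataBelow Hs i) := fun z ⟨w, hw⟩ =>
    mem_aperyM_of_add_left (add_comm z w ▸ hw ▸ hx)
  obtain ⟨a, ha, z, hz, rfl⟩ := (hlink i).exists_eq_add_mem_aperyM hx0
    fun z hz => mem_closure_of_mem_aperyM_strataBelow hatomic hunion i (hdvd z hz)
  refine ⟨a, ha, z, ?_, rfl⟩
  rw [strataBelow_succ, aperyM_union]
  exact ⟨mem_aperyM_of_add_left hx, hz⟩

lemma eq_and_eq_of_add_eq_add_of_mem_aperyM_strataBelow (hatomic : AtomicM M)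
    (hunion : (⋃ i, Hs i) = {a : M | IsAtomM a})
    (hcop : ∀ i : Fin k, ∀ q ∈ Hs i, ∀ q' ∈ Hs i, q ≠ q' →
      CoprimeIn (AddSubmonoid.closure (⋃ j ∈ {j : Fin k | i ≤ j}, Hs j)) q q')
    (i : Fin k) {a b u v : M} (ha : a ∈ AddSubmonoid.closure (Hs i))
    (hb : b ∈ AddSubmonoid.closure (Hs i)) (hu : u ∈ AperyM (strataBelow Hs (i + 1)))
    (hv : v ∈ AperyM (strataBelow Hs (i + 1))) (h : a + u = b + v) : a = b ∧ u = v := by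
  rw [strataBelow_succ, aperyM_union] at hu hv
  exact eq_and_eq_of_add_eq_add
    (fun q hq => AddSubmonoid.subset_closure (Set.mem_biUnion le_rfl hq)) (hcop i) ha hb
    (mem_closure_of_mem_aperyM_strataBelow hatomic hunion i hu.1)
    (mem_closure_of_mem_aperyM_strataBelow hatomic hunion i hv.1) hu.2 hv.2 h

end Stratification

section Representation

variable {k : ℕ} (Hs : Fin k → Set M)

lemma mem_aperyM_strataBelow_zero (x : M) : x ∈ AperyM (strataBelow Hs 0) :=
  fun q hq => by simp [strataBelow] at hq

def IsStratifiedRep (h : Fin k → M) : Prop :=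
  (∀ i, h i ∈ AddSubmonoid.closure (Hs i)) ∧ ∀ n, tailSum h n ∈ AperyM (strataBelow Hs n)

variable {Hs}

lemma exists_tailSum_eq (hred : ∀ a b : M, a + b = 0 → a = 0) (hatomic : AtomicM M)
    (hunion : (⋃ i, Hs i) = {a : M | IsAtomM a})
    (hlink : ∀ i : Fin k,
      LinkedIn (AddSubmonoid.closure (⋃ j ∈ {j : Fin k | i ≤ j}, Hs j)) (Hs i))
    {n : ℕ} (hn : n ≤ k) {x : M} (hx : x ∈ AperyM (strataBelow Hs n)) :
    ∃ h : Fin k → M, (∀ j, h j ∈ AddSubmonoid.closure (Hs j)) ∧ tailSum h n = x ∧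
      ∀ m, n ≤ m → tailSum h m ∈ AperyM (strataBelow Hs m) := by
  induction hn using Nat.decreasingInduction generalizing x with
  | self =>
    have hx0 : x = 0 := hatomic.eq_zero_of_forall_not_mdvd fun q hq =>
      hx q (strataBelow_of_le Hs le_rfl ▸ hunion ▸ hq)
    refine ⟨0, fun _ => zero_mem _, by rw [hx0, tailSum_of_le _ le_rfl], fun m hm => ?_⟩
    rw [tailSum_of_le _ hm]
    exact zero_mem_aperyM_strataBelow hred hunion m
  | of_succ n hn ih =>
    obtain ⟨a, ha, z, hz, rfl⟩ :=
      exists_eq_add_of_mem_aperyM_strataBelow hred hatomic hunion hlink ⟨n, hn⟩ hx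
    obtain ⟨h, hmem, rfl, htail⟩ := ih hz
    have htail_succ : ∀ m, n < m → tailSum (Function.update h ⟨n, hn⟩ a) m = tailSum h m :=
      fun m hm => tailSum_update_of_lt h hm a
    have htail_self : tailSum (Function.update h ⟨n, hn⟩ a) n = a + tailSum h (n + 1) := by
      rw [tailSum_eq_add _ ⟨n, hn⟩, Function.update_self, htail_succ _ n.lt_succ_self]
    refine ⟨Function.update h ⟨n, hn⟩ a, fun j => ?_, htail_self, fun m hm => ?_⟩
    · rcases eq_or_ne j ⟨n, hn⟩ with rfl | hj
      · rwa [Function.update_self]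
      · rw [Function.update_of_ne hj]
        exact hmem j
    · rcases hm.eq_or_lt with rfl | hm
      · rwa [htail_self]
      · rw [htail_succ m hm]
        exact htail m hm

lemma exists_isStratifiedRep (hred : ∀ a b : M, a + b = 0 → a = 0) (hatomic : AtomicM M)
    (hunion : (⋃ i, Hs i) = {a : M | IsAtomM a})
    (hlink : ∀ i : Fin k,
      LinkedIn (AddSubmonoid.closure (⋃ j ∈ {j : Fin k | i ≤ j}, Hs j)) (Hs i)) (x : M) :
    ∃ h : Fin k → M, IsStratifiedRep Hs h ∧ ∑ j, h j = x := by
  obtain ⟨h, hmem, hx, htail⟩ := exists_tailSum_eq hred hatomic hunion hlink (Nat.zero_le k)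
    (mem_aperyM_strataBelow_zero Hs x)
  exact ⟨h, ⟨hmem, fun m => htail m m.zero_le⟩, tailSum_zero h ▸ hx⟩

lemma IsStratifiedRep.eq_of_sum_eq (hatomic : AtomicM M)
    (hunion : (⋃ i, Hs i) = {a : M | IsAtomM a})
    (hcop : ∀ i : Fin k, ∀ q ∈ Hs i, ∀ q' ∈ Hs i, q ≠ q' →
      CoprimeIn (AddSubmonoid.closure (⋃ j ∈ {j : Fin k | i ≤ j}, Hs j)) q q')
    {h h' : Fin k → M} (hh : IsStratifiedRep Hs h) (hh' : IsStratifiedRep Hs h')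
    (hsum : ∑ j, h j = ∑ j, h' j) : h = h' := by
  have hstage (i : Fin k) (hi : tailSum h i = tailSum h' i) :=
    eq_and_eq_of_add_eq_add_of_mem_aperyM_strataBelow hatomic hunion hcop i
      (hh.1 i) (hh'.1 i) (hh.2 (i + 1)) (hh'.2 (i + 1))
      (by rwa [← tailSum_eq_add, ← tailSum_eq_add])
  have htail : ∀ n, tailSum h n = tailSum h' n := by
    intro n
    induction n with
    | zero => rwa [tailSum_zero, tailSum_zero]
    | succ n ih =>
      obtain hnk | hkn := lt_or_ge n k
      · exact (hstage ⟨n, hnk⟩ ih).2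
      · rw [tailSum_of_le h (by omega), tailSum_of_le h' (by omega)]
  exact funext fun i => (hstage i (htail i)).1

lemma isStratifiedRep_iff (hred : ∀ a b : M, a + b = 0 → a = 0)
    (hunion : (⋃ i, Hs i) = {a : M | IsAtomM a}) (h : Fin k → M) :
    IsStratifiedRep Hs h ↔ (∀ i, h i ∈ AddSubmonoid.closure (Hs i)) ∧
      ∀ i : Fin k, 0 < (i : ℕ) →
        (∑ j ∈ Finset.univ.filter fun j => i ≤ j, h j) ∈
          AperyM (⋃ j ∈ {j : Fin k | j < i}, Hs j) := by
  refine and_congr_right fun _ => ⟨fun htail i _ => htail i, fun htail n => ?_⟩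
  obtain hnk | hkn := lt_or_ge n k
  · rcases Nat.eq_zero_or_pos n with rfl | hn
    · exact mem_aperyM_strataBelow_zero Hs _
    · exact htail ⟨n, hnk⟩ hn
  · rw [tailSum_of_le h hkn]
    exact zero_mem_aperyM_strataBelow hred hunion n

end Representation

end Development

theorem stratification_unique_representation_general {M : Type*} [AddCancelCommMonoid M]
    (hred : ∀ a b : M, a + b = 0 → a = 0)
    (hatomic : AtomicM M)
    (k : ℕ) (Hs : Fin k → Set M)
    (hunion : (⋃ i, Hs i) = {a : M | IsAtomM a})
    (hlink : ∀ i : Fin k,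
      LinkedIn (AddSubmonoid.closure (⋃ j ∈ {j : Fin k | i ≤ j}, Hs j)) (Hs i))
    (hcop : ∀ i : Fin k, ∀ q ∈ Hs i, ∀ q' ∈ Hs i, q ≠ q' →
      CoprimeIn (AddSubmonoid.closure (⋃ j ∈ {j : Fin k | i ≤ j}, Hs j)) q q') :
    ∀ x : M, ∃! h : Fin k → M,
      (∀ i, h i ∈ AddSubmonoid.closure (Hs i)) ∧
      x = ∑ i, h i ∧
      ∀ i : Fin k, 0 < (i : ℕ) →
        (∑ j ∈ Finset.univ.filter fun j => i ≤ j, h j) ∈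
          AperyM (⋃ j ∈ {j : Fin k | j < i}, Hs j) := by
  intro x
  obtain ⟨h, hrep, rfl⟩ := exists_isStratifiedRep hred hatomic hunion hlink x
  obtain ⟨hmem, htail⟩ := (isStratifiedRep_iff hred hunion h).1 hrep
  refine ⟨h, ⟨hmem, rfl, htail⟩, fun h' ⟨hmem', hsum', htail'⟩ => ?_⟩
  exact (hrep.eq_of_sum_eq hatomic hunion hcop
    ((isStratifiedRep_iff hred hunion h').2 ⟨hmem', htail'⟩) hsum').symm

/-- if the set of atoms of an atomic monoid `M` admits a stratification
`H = H₁ ∪ ⋯ ∪ H_k` (each `⟨Hᵢ⟩` factorial, `Hᵢ` linked to `Mᵢ = ⟨Hᵢ ∪ ⋯ ∪ H_k⟩`)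
such that distinct elements of `Hᵢ` are coprime in `Mᵢ`, then every `x ∈ M` has a
unique representation `x = h₁ + ⋯ + h_k` with `hᵢ ∈ ⟨Hᵢ⟩` and
`hᵢ + ⋯ + h_k ∈ Ap(M, H₁ ∪ ⋯ ∪ H_{i-1})` for `i ≥ 2`. -/
theorem stratification_unique_representation {M : Type*} [AddCancelCommMonoid M]
    (hred : ∀ a b : M, a + b = 0 → a = 0)
    (hatomic : AtomicM M)
    (k : ℕ) (Hs : Fin k → Set M)
    (hdisj : ∀ i j, i ≠ j → Disjoint (Hs i) (Hs j))
    (hunion : (⋃ i, Hs i) = {a : M | IsAtomM a})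
    (hfree : ∀ i, FreeOn (Hs i))
    (hlink : ∀ i : Fin k,
      LinkedIn (AddSubmonoid.closure (⋃ j ∈ {j : Fin k | i ≤ j}, Hs j)) (Hs i))
    (hcop : ∀ i : Fin k, ∀ q ∈ Hs i, ∀ q' ∈ Hs i, q ≠ q' →
      CoprimeIn (AddSubmonoid.closure (⋃ j ∈ {j : Fin k | i ≤ j}, Hs j)) q q') :
    ∀ x : M, ∃! h : Fin k → M,
      (∀ i, h i ∈ AddSubmonoid.closure (Hs i)) ∧
      x = ∑ i, h i ∧
      ∀ i : Fin k, 0 < (i : ℕ) →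
        (∑ j ∈ Finset.univ.filter fun j => i ≤ j, h j) ∈
          AperyM (⋃ j ∈ {j : Fin k | j < i}, Hs j) :=
  stratification_unique_representation_general hred hatomic k Hs hunion hlink hcop
end

section
/- Let M be a root-closed inside factorial monoid whose set of atoms admits a stratification H = H₁ ∪ ... ∪ H_k such that M_i = ⟨H_i ∪ ... ∪ H_k⟩ is inside factorial with base H_i for each i. Then for all i ∈ {1,...,k−1}, Ap(M, H₁ ∪ ... ∪ H_i) ⊆ D_{M_i}(H_i). -/
/-- `M` is root-closed: `n • a ≤_M n • b` for a positive `n` implies `a ≤_M b`. -/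
def RootClosedM (M : Type*) [AddCancelCommMonoid M] : Prop :=
  ∀ (n : ℕ) (a b : M), 0 < n → MDvd (n • a) (n • b) → MDvd a b

/-- The submonoid `N` is inside factorial with base `Q ⊆ N`. -/
def InsideFactIn {M : Type*} [AddCancelCommMonoid M] (N : AddSubmonoid M)
    (Q : Set M) : Prop :=
  Q ⊆ (N : Set M) ∧ FreeOn Q ∧
    ∀ x ∈ N, x ≠ 0 → ∃ m : ℕ, 0 < m ∧ m • x ∈ AddSubmonoid.closure Q

/-- `D_N(Q)`: elements of `N` all of whose coordinates with respect to the base `Q`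
are strictly smaller than `1`. -/
def DIn {M : Type*} [AddCancelCommMonoid M] (N : AddSubmonoid M) (Q : Set M) :
    Set M :=
  {x | x ∈ N ∧ ∃ n : ℕ, 0 < n ∧ ∃ f : M →₀ ℕ, (f.support : Set M) ⊆ Q ∧
    n • x = fsum f ∧ ∀ q : M, f q < n}

/-! An element `x` of `Ap(M, H₁ ∪ ⋯ ∪ Hᵢ)` is divisible by no atom of `H₁ ∪ ⋯ ∪ Hᵢ`, so by
atomicity it lies in `Mᵢ`. Inside factoriality gives `m • x = Σ λ_q q` over `Hᵢ`; a coordinate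
`λ_q ≥ m` would make `m • q` divide `m • x`, hence `q` divide `x` by root-closedness, which the
Apéry condition forbids. -/

section

variable {M : Type*} [AddCancelCommMonoid M]

lemma fsum_eq_linearCombination (f : M →₀ ℕ) :
    fsum f = Finsupp.linearCombination ℕ id f := rfl

lemma fsum_add (f g : M →₀ ℕ) : fsum (f + g) = fsum f + fsum g := by
  simp only [fsum_eq_linearCombination, map_add]

lemma fsum_single (q : M) (n : ℕ) : fsum (Finsupp.single q n) = n • q := by
  simp [fsum_eq_linearCombination]

lemma exists_fsum_eq_of_mem_closure {Q : Set M} {x : M} (hx : x ∈ AddSubmonoid.closure Q) :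
    ∃ f : M →₀ ℕ, (f.support : Set M) ⊆ Q ∧ fsum f = x := by
  rw [← Submodule.span_nat_eq_addSubmonoidClosure, Submodule.mem_toAddSubmonoid,
    ← Set.image_id Q, Finsupp.mem_span_image_iff_linearCombination] at hx
  obtain ⟨f, hf, rfl⟩ := hx
  exact ⟨f, (Finsupp.mem_supported ℕ f).mp hf, rfl⟩

lemma mdvd_fsum_of_le {f : M →₀ ℕ} {q : M} {n : ℕ} (h : n ≤ f q) :
    MDvd (n • q) (fsum f) := by
  refine ⟨fsum (f - Finsupp.single q n), ?_⟩
  rw [← fsum_single, ← fsum_add, add_tsub_cancel_of_le (Finsupp.single_le_iff.mpr h)]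

lemma mem_closure_of_forall_atom_dvd (hatomic : AtomicM M) {S : Set M} {x : M}
    (h : ∀ a, IsAtomM a → MDvd a x → a ∈ S) : x ∈ AddSubmonoid.closure S := by
  classical
  obtain ⟨l, hl, rfl⟩ := hatomic x
  refine AddSubmonoid.multiset_sum_mem _ l fun a ha => AddSubmonoid.subset_closure ?_
  refine h a (hl a ha) ⟨(l.erase a).sum, ?_⟩
  rw [← Multiset.sum_cons, Multiset.cons_erase ha]

lemma mem_DIn_of_mem_apery (hrc : RootClosedM M) {N : AddSubmonoid M} {Q X : Set M}
    (hQX : Q ⊆ X) (hroot : ∀ x ∈ N, x ≠ 0 → ∃ m : ℕ, 0 < m ∧ m • x ∈ AddSubmonoid.closure Q)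
    {x : M} (hxN : x ∈ N) (hx : x ∈ AperyM X) : x ∈ DIn N Q := by
  by_cases hx0 : x = 0
  · exact ⟨hxN, 1, one_pos, 0, by simp, by simp [hx0, fsum], by simp⟩
  obtain ⟨m, hm, hmx⟩ := hroot x hxN hx0
  obtain ⟨f, hfQ, hfx⟩ := exists_fsum_eq_of_mem_closure hmx
  refine ⟨hxN, m, hm, f, hfQ, hfx.symm, fun q => ?_⟩
  by_contra! hle
  have hq : q ∈ Q := hfQ (Finsupp.mem_support_iff.mpr (by omega))
  exact hx q (hQX hq) (hrc m q x hm (hfx ▸ mdvd_fsum_of_le hle))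

end

theorem apery_subset_DIn_general {M : Type*} [AddCancelCommMonoid M]
    (hatomic : AtomicM M) (hrc : RootClosedM M)
    (k : ℕ) (Hs : Fin k → Set M)
    (hunion : (⋃ i, Hs i) = {a : M | IsAtomM a})
    (hIF : ∀ i : Fin k,
      InsideFactIn (AddSubmonoid.closure (⋃ j ∈ {j : Fin k | i ≤ j}, Hs j)) (Hs i)) :
    ∀ i : Fin k, (i : ℕ) < k - 1 →
      AperyM (⋃ j ∈ {j : Fin k | j ≤ i}, Hs j) ⊆
        DIn (AddSubmonoid.closure (⋃ j ∈ {j : Fin k | i ≤ j}, Hs j)) (Hs i) := by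
  intro i _ x hx
  have hxN : x ∈ AddSubmonoid.closure (⋃ j ∈ {j : Fin k | i ≤ j}, Hs j) := by
    refine mem_closure_of_forall_atom_dvd hatomic fun a ha hax => ?_
    obtain ⟨j, hj⟩ := Set.mem_iUnion.mp (hunion.symm ▸ ha : a ∈ ⋃ j, Hs j)
    have hij : i ≤ j := by
      by_contra! hji
      exact hx a (Set.mem_biUnion hji.le hj) hax
    exact Set.mem_biUnion hij hj
  have hHi : Hs i ⊆ ⋃ j ∈ {j : Fin k | j ≤ i}, Hs j :=
    Set.subset_biUnion_of_mem (u := Hs) (le_refl i)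
  exact mem_DIn_of_mem_apery hrc hHi (hIF i).2.2 hxN hx

/-- let `M` be a root-closed inside factorial monoid whose set of atoms
admits a stratification `H = H₁ ∪ ⋯ ∪ H_k` with each `Mᵢ = ⟨Hᵢ ∪ ⋯ ∪ H_k⟩` inside
factorial with base `Hᵢ`. Then `Ap(M, H₁ ∪ ⋯ ∪ Hᵢ) ⊆ D_{Mᵢ}(Hᵢ)` for
`i ∈ {1, …, k−1}`. -/
theorem apery_subset_DIn {M : Type*} [AddCancelCommMonoid M]
    (hred : ∀ a b : M, a + b = 0 → a = 0)
    (hatomic : AtomicM M) (hrc : RootClosedM M)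
    (k : ℕ) (Hs : Fin k → Set M)
    (hdisj : ∀ i j, i ≠ j → Disjoint (Hs i) (Hs j))
    (hunion : (⋃ i, Hs i) = {a : M | IsAtomM a})
    (hfree : ∀ i, FreeOn (Hs i))
    (hlink : ∀ i : Fin k,
      LinkedIn (AddSubmonoid.closure (⋃ j ∈ {j : Fin k | i ≤ j}, Hs j)) (Hs i))
    (hIF : ∀ i : Fin k,
      InsideFactIn (AddSubmonoid.closure (⋃ j ∈ {j : Fin k | i ≤ j}, Hs j)) (Hs i)) :
    ∀ i : Fin k, (i : ℕ) < k - 1 →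
      AperyM (⋃ j ∈ {j : Fin k | j ≤ i}, Hs j) ⊆
        DIn (AddSubmonoid.closure (⋃ j ∈ {j : Fin k | i ≤ j}, Hs j)) (Hs i) :=
  apery_subset_DIn_general hatomic hrc k Hs hunion hIF
end
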